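/- arXiv:2103.02001 — 3 statements merged into one kernel-verified Lean document; each statement's English description precedes it below -/
import Mathlib

section
/- Given a two-level (lax-Gray) adjunction (F, U, η, ε, f, u), the derived data satisfies the coherence axiom [Mq]: for every object X of 𝕏, the composite 2-cell μ_X ⟹ μ_X ∘ η_{TX} ∘ μ_X ⟹ μ_X ∘ T(μ_X) ∘ η_{T²X} ⟹ μ_X ∘ μ_{TX} ∘ η_{T²X} given by (a_X ◁ η_{T²X}) ∙ (μ_X ▷ η_{μ_X}) ∙ (q_X ◁ μ_X) equals the 2-cell μ_X ▷ q_{TX} : μ_X ⟹ μ_X ∘ (μ_{TX} ∘ η_{T²X}), where η_{μ_X} : η_{TX} ∘ μ_X ⟹ T(μ_X) ∘ η_{T²X} is the lax-naturality 2-cell of η at the 1-cell μ_X and q_{TX} = u_{F T X}. -/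
open CategoryTheory

infixr:81 " ◁ " => Bicategory.whiskerLeft
infixl:81 " ▷ " => Bicategory.whiskerRight

universe w₁ w₂ w₃ v₁ v₂ v₃ u₁ u₂ u₃

/-- A strict 2-functor between strict bicategories: it preserves identities and
compositions of 1-cells on the nose, is functorial on 2-cells, and is compatible
with whiskering. -/
structure Strict2Functor (B : Type u₁) (C : Type u₂) [Bicategory.{w₁, v₁} B]
    [Bicategory.Strict B] [Bicategory.{w₂, v₂} C] [Bicategory.Strict C] where
  obj : B → C
  map : ∀ {a b : B}, (a ⟶ b) → (obj a ⟶ obj b)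
  map₂ : ∀ {a b : B} {f g : a ⟶ b}, (f ⟶ g) → (map f ⟶ map g)
  map_id : ∀ a : B, map (𝟙 a) = 𝟙 (obj a)
  map_comp : ∀ {a b c : B} (f : a ⟶ b) (g : b ⟶ c), map (f ≫ g) = map f ≫ map g
  map₂_id : ∀ {a b : B} (f : a ⟶ b), map₂ (𝟙 f) = 𝟙 (map f)
  map₂_comp : ∀ {a b : B} {f g h : a ⟶ b} (η : f ⟶ g) (θ : g ⟶ h),
    map₂ (η ≫ θ) = map₂ η ≫ map₂ θ
  map₂_whiskerLeft : ∀ {a b c : B} (f : a ⟶ b) {g h : b ⟶ c} (η : g ⟶ h),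
    map₂ (f ◁ η) = eqToHom (map_comp f g) ≫ (map f ◁ map₂ η) ≫ eqToHom (map_comp f h).symm
  map₂_whiskerRight : ∀ {a b c : B} {f g : a ⟶ b} (η : f ⟶ g) (h : b ⟶ c),
    map₂ (η ▷ h) = eqToHom (map_comp f h) ≫ (map₂ η ▷ map h) ≫ eqToHom (map_comp g h).symm

namespace Strict2Functor

variable {B : Type u₁} {C : Type u₂} {D : Type u₃} [Bicategory.{w₁, v₁} B] [Bicategory.Strict B]
  [Bicategory.{w₂, v₂} C] [Bicategory.Strict C] [Bicategory.{w₃, v₃} D] [Bicategory.Strict D]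

lemma map₂_eqToHom (F : Strict2Functor B C) {a b : B} {f g : a ⟶ b} (h : f = g) :
    F.map₂ (eqToHom h) = eqToHom (congrArg F.map h) := by
  subst h; simp [F.map₂_id]

/-- The identity strict 2-functor. -/
def id (B : Type u₁) [Bicategory.{w₁, v₁} B] [Bicategory.Strict B] : Strict2Functor B B where
  obj a := a
  map f := f
  map₂ η := η
  map_id _ := rfl
  map_comp _ _ := rfl
  map₂_id _ := rfl
  map₂_comp _ _ := rfl
  map₂_whiskerLeft _ _ := by simp
  map₂_whiskerRight _ _ := by simp

/-- Composition of strict 2-functors (diagrammatic order). -/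
def comp (F : Strict2Functor B C) (G : Strict2Functor C D) : Strict2Functor B D where
  obj a := G.obj (F.obj a)
  map f := G.map (F.map f)
  map₂ η := G.map₂ (F.map₂ η)
  map_id a := by rw [F.map_id, G.map_id]
  map_comp f g := by rw [F.map_comp, G.map_comp]
  map₂_id f := by rw [F.map₂_id, G.map₂_id]
  map₂_comp η θ := by rw [F.map₂_comp, G.map₂_comp]
  map₂_whiskerLeft := by
    intro a b c f g h η
    rw [F.map₂_whiskerLeft, G.map₂_comp, G.map₂_comp, G.map₂_eqToHom, G.map₂_eqToHom,
      G.map₂_whiskerLeft]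
    simp [eqToHom_trans]
  map₂_whiskerRight := by
    intro a b c f g η h
    rw [F.map₂_whiskerRight, G.map₂_comp, G.map₂_comp, G.map₂_eqToHom, G.map₂_eqToHom,
      G.map₂_whiskerRight]
    simp [eqToHom_trans]

end Strict2Functor

variable {B : Type u₁} {C : Type u₂} {D : Type u₃} [Bicategory.{w₁, v₁} B] [Bicategory.Strict B]
  [Bicategory.{w₂, v₂} C] [Bicategory.Strict C] [Bicategory.{w₃, v₃} D] [Bicategory.Strict D]

/-- The data of a lax natural transformation: components and naturality 2-cells. -/
structure LaxTransCore (S T : Strict2Functor B C) where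
  app : ∀ a : B, S.obj a ⟶ T.obj a
  naturality : ∀ {a b : B} (g : a ⟶ b), S.map g ≫ app b ⟶ app a ≫ T.map g

/-- A lax natural transformation between strict 2-functors: components `app a`,
naturality 2-cells `naturality g : S g ≫ app b ⟶ app a ≫ T g`, compatible with 2-cells,
with `naturality (𝟙 a)` an identity and `naturality` of a composite given by pasting. -/
structure LaxTrans (S T : Strict2Functor B C) extends LaxTransCore S T where
  naturality_id : ∀ a : B,
    naturality (𝟙 a) = eqToHom (by rw [S.map_id, T.map_id, Category.id_comp, Category.comp_id])
  naturality_comp : ∀ {a b c : B} (g : a ⟶ b) (h : b ⟶ c),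
    naturality (g ≫ h) =
      eqToHom (by rw [S.map_comp, Category.assoc]) ≫
      (S.map g ◁ naturality h) ≫
      eqToHom (by rw [Category.assoc]) ≫
      (naturality g ▷ T.map h) ≫
      eqToHom (by rw [T.map_comp, Category.assoc])
  naturality₂ : ∀ {a b : B} {g g' : a ⟶ b} (ζ : g ⟶ g'),
    (S.map₂ ζ ▷ app b) ≫ naturality g' = naturality g ≫ (app a ◁ T.map₂ ζ)

namespace LaxTransCore

variable {S T R : Strict2Functor B C}

/-- Vertical composite of (the data of) lax natural transformations. -/
def vcomp (φ : LaxTransCore S T) (ψ : LaxTransCore T R) : LaxTransCore S R where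
  app a := φ.app a ≫ ψ.app a
  naturality {a b} g :=
    eqToHom (by rw [Category.assoc]) ≫
    (φ.naturality g ▷ ψ.app b) ≫
    eqToHom (by rw [Category.assoc]) ≫
    (φ.app a ◁ ψ.naturality g) ≫
    eqToHom (by rw [Category.assoc])

/-- Post-whiskering of (the data of) a lax natural transformation with a strict 2-functor:
the transformation `Gφ` with components `G (φ a)`. -/
def post (φ : LaxTransCore S T) (G : Strict2Functor C D) :
    LaxTransCore (S.comp G) (T.comp G) where
  app a := G.map (φ.app a)
  naturality {a b} g :=
    eqToHom (G.map_comp _ _).symm ≫ G.map₂ (φ.naturality g) ≫ eqToHom (G.map_comp _ _)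

/-- Pre-whiskering of (the data of) a lax natural transformation with a strict 2-functor:
the transformation `φG` with components `φ (G a)`. -/
def pre {S T : Strict2Functor C D} (φ : LaxTransCore S T) (G : Strict2Functor B C) :
    LaxTransCore (G.comp S) (G.comp T) where
  app a := φ.app (G.obj a)
  naturality {_ _} g := φ.naturality (G.map g)

/-- The identity lax natural transformation on a strict 2-functor. -/
def id (F : Strict2Functor B C) : LaxTransCore F F where
  app a := 𝟙 (F.obj a)
  naturality {_ _} g := eqToHom (by rw [Category.id_comp, Category.comp_id])

end LaxTransCore

/-- `m` is a modification between (the underlying data of) lax natural transformations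
`σ ⇛ τ` if for every 1-cell `g` the modification square commutes. -/
def IsModification {S T : Strict2Functor B C} (σ τ : LaxTransCore S T)
    (m : ∀ a : B, σ.app a ⟶ τ.app a) : Prop :=
  ∀ {a b : B} (g : a ⟶ b),
    (S.map g ◁ m b) ≫ τ.naturality g = σ.naturality g ≫ (m a ▷ T.map g)

/-- A two-level (lax-Gray) adjunction `(F, U, η, ε, f, u)` between strict 2-categories:
strict 2-functors `F, U`, lax natural transformations `η : Id ⟹ U∘F`, `ε : F∘U ⟹ Id`,
modifications `f : (εF)∘(Fη) ⇛ 1_F` and `u : 1_U ⇛ (Uε)∘(ηU)` satisfying the coherence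
equations `[1_η]` and `[1_ε]`. -/
structure LaxGrayAdjunction (X : Type u₁) (A : Type u₂) [Bicategory.{w₁, v₁} X]
    [Bicategory.Strict X] [Bicategory.{w₂, v₂} A] [Bicategory.Strict A] where
  F : Strict2Functor X A
  U : Strict2Functor A X
  η : LaxTrans (Strict2Functor.id X) (F.comp U)
  ε : LaxTrans (U.comp F) (Strict2Functor.id A)
  f : ∀ x : X, F.map (η.app x) ≫ ε.app (F.obj x) ⟶ 𝟙 (F.obj x)
  f_mod : IsModification ((η.toLaxTransCore.post F).vcomp (ε.toLaxTransCore.pre F))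
    (LaxTransCore.id F) f
  u : ∀ a : A, 𝟙 (U.obj a) ⟶ η.app (U.obj a) ≫ U.map (ε.app a)
  u_mod : IsModification (LaxTransCore.id U)
    ((η.toLaxTransCore.pre U).vcomp (ε.toLaxTransCore.post U)) u
  coh_η : ∀ x : X,
    eqToHom (Category.comp_id (η.app x)).symm ≫
    (η.app x ◁ u (F.obj x)) ≫
    eqToHom (Category.assoc _ _ _).symm ≫
    (η.naturality (η.app x) ▷ U.map (ε.app (F.obj x))) ≫
    eqToHom (Category.assoc _ _ _) ≫
    (η.app x ◁ (eqToHom (U.map_comp _ _).symm ≫ U.map₂ (f x) ≫ eqToHom (U.map_id _))) ≫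
    eqToHom (Category.comp_id (η.app x)) = 𝟙 (η.app x)
  coh_ε : ∀ a : A,
    eqToHom (Category.id_comp (ε.app a)).symm ≫
    ((eqToHom (F.map_id _).symm ≫ F.map₂ (u a) ≫ eqToHom (F.map_comp _ _)) ▷ ε.app a) ≫
    eqToHom (Category.assoc _ _ _) ≫
    (F.map (η.app (U.obj a)) ◁ ε.naturality (ε.app a)) ≫
    eqToHom (Category.assoc _ _ _).symm ≫
    (f (U.obj a) ▷ ε.app a) ≫
    eqToHom (Category.id_comp (ε.app a)) = 𝟙 (ε.app a)

namespace LaxGrayAdjunction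

variable {X : Type u₁} {A : Type u₂} [Bicategory.{w₁, v₁} X] [Bicategory.Strict X]
  [Bicategory.{w₂, v₂} A] [Bicategory.Strict A] (adj : LaxGrayAdjunction X A)

/-- The strict 2-endofunctor `T = U ∘ F` of `𝕏` derived from the adjunction. -/
def T : Strict2Functor X X := adj.F.comp adj.U

/-- The lax natural transformation `μ = UεF : T∘T ⟹ T`, with components
`μ_x = U(ε_{Fx})` and naturality cells `μ_g = U(ε_{Fg})`. -/
def μc : LaxTransCore (adj.T.comp adj.T) adj.T :=
  (adj.ε.toLaxTransCore.pre adj.F).post adj.U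

/-- The 2-cell `a_x = U(ε_{ε_{Fx}}) : μ_x ∘ T(μ_x) ⟹ μ_x ∘ μ_{Tx}`. -/
def aCell (x : X) :
    adj.T.map (adj.μc.app x) ≫ adj.μc.app x ⟶ adj.μc.app (adj.T.obj x) ≫ adj.μc.app x :=
  eqToHom (adj.U.map_comp _ _).symm ≫
    adj.U.map₂ (adj.ε.naturality (adj.ε.app (adj.F.obj x))) ≫ eqToHom (adj.U.map_comp _ _)

/-- The 2-cell `p_x = U(f_x) : μ_x ∘ T(η_x) ⟹ 1_{Tx}`. -/
def pCell (x : X) :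
    adj.T.map (adj.η.app x) ≫ adj.μc.app x ⟶ 𝟙 (adj.T.obj x) :=
  eqToHom (adj.U.map_comp _ _).symm ≫ adj.U.map₂ (adj.f x) ≫ eqToHom (adj.U.map_id _)

/-- The 2-cell `q_x = u_{Fx} : 1_{Tx} ⟹ μ_x ∘ η_{Tx}`. -/
def qCell (x : X) : 𝟙 (adj.T.obj x) ⟶ adj.η.app (adj.T.obj x) ≫ adj.μc.app x :=
  adj.u (adj.F.obj x)

/-- `T(a_x) = UF(a_x)`. -/
def TaCell (x : X) :
    adj.T.map (adj.T.map (adj.μc.app x)) ≫ adj.T.map (adj.μc.app x) ⟶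
      adj.T.map (adj.μc.app (adj.T.obj x)) ≫ adj.T.map (adj.μc.app x) :=
  eqToHom (adj.T.map_comp _ _).symm ≫ adj.T.map₂ (adj.aCell x) ≫ eqToHom (adj.T.map_comp _ _)

/-- `T(p_x) = UF(p_x)`. -/
def TpCell (x : X) :
    adj.T.map (adj.T.map (adj.η.app x)) ≫ adj.T.map (adj.μc.app x) ⟶
      𝟙 (adj.T.obj (adj.T.obj x)) :=
  eqToHom (adj.T.map_comp _ _).symm ≫ adj.T.map₂ (adj.pCell x) ≫ eqToHom (adj.T.map_id _)

/-- `T(q_x) = UF(q_x)`. -/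
def TqCell (x : X) :
    𝟙 (adj.T.obj (adj.T.obj x)) ⟶
      adj.T.map (adj.η.app (adj.T.obj x)) ≫ adj.T.map (adj.μc.app x) :=
  eqToHom (adj.T.map_id _).symm ≫ adj.T.map₂ (adj.qCell x) ≫ eqToHom (adj.T.map_comp _ _)

/-- The coherence axiom `[Ma]` at an object `x`. -/
def Ma (x : X) : Prop :=
  (adj.T.map (adj.T.map (adj.μc.app x)) ◁ adj.aCell x) ≫
  eqToHom (Category.assoc _ _ _).symm ≫
  (adj.μc.naturality (adj.μc.app x) ▷ adj.μc.app x) ≫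
  eqToHom (Category.assoc _ _ _) ≫
  (adj.μc.app ((adj.T.comp adj.T).obj x) ◁ adj.aCell x)
  =
  eqToHom (Category.assoc _ _ _).symm ≫
  (adj.TaCell x ▷ adj.μc.app x) ≫
  eqToHom (Category.assoc _ _ _) ≫
  (adj.T.map (adj.μc.app (adj.T.obj x)) ◁ adj.aCell x) ≫
  eqToHom (Category.assoc _ _ _).symm ≫
  (adj.aCell (adj.T.obj x) ▷ adj.μc.app x) ≫
  eqToHom (Category.assoc _ _ _)

/-- The coherence axiom `[Mη]` at an object `x`. -/
def Mη (x : X) : Prop :=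
  eqToHom (Category.comp_id (adj.η.app x)).symm ≫
  (adj.η.app x ◁ adj.qCell x) ≫
  eqToHom (Category.assoc _ _ _).symm ≫
  (adj.η.naturality (adj.η.app x) ▷ adj.μc.app x) ≫
  eqToHom (Category.assoc _ _ _) ≫
  (adj.η.app x ◁ adj.pCell x) ≫
  eqToHom (Category.comp_id (adj.η.app x)) = 𝟙 (adj.η.app x)

/-- The coherence axiom `[Mμ]` at an object `x`. -/
def Mμ (x : X) : Prop :=
  eqToHom (Category.id_comp (adj.μc.app x)).symm ≫
  (adj.TqCell x ▷ adj.μc.app x) ≫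
  eqToHom (Category.assoc _ _ _) ≫
  (adj.T.map (adj.η.app (adj.T.obj x)) ◁ adj.aCell x) ≫
  eqToHom (Category.assoc _ _ _).symm ≫
  (adj.pCell (adj.T.obj x) ▷ adj.μc.app x) ≫
  eqToHom (Category.id_comp (adj.μc.app x)) = 𝟙 (adj.μc.app x)

/-- The coherence axiom `[Mq]` at an object `x`. -/
def Mq (x : X) : Prop :=
  eqToHom (Category.comp_id (adj.μc.app x)).symm ≫
  (adj.μc.app x ◁ adj.qCell x) ≫
  eqToHom (Category.assoc _ _ _).symm ≫
  (adj.η.naturality (adj.μc.app x) ▷ adj.μc.app x) ≫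
  eqToHom (Category.assoc _ _ _) ≫
  (adj.η.app ((adj.T.comp adj.T).obj x) ◁ adj.aCell x)
  =
  eqToHom (Category.id_comp (adj.μc.app x)).symm ≫
  (adj.qCell (adj.T.obj x) ▷ adj.μc.app x) ≫
  eqToHom (Category.assoc _ _ _)

/-- The coherence axiom `[Mp]` at an object `x`. -/
def Mp (x : X) : Prop :=
  (adj.T.map (adj.T.map (adj.η.app x)) ◁ adj.aCell x) ≫
  eqToHom (Category.assoc _ _ _).symm ≫
  (adj.μc.naturality (adj.η.app x) ▷ adj.μc.app x) ≫
  eqToHom (Category.assoc _ _ _) ≫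
  (adj.μc.app x ◁ adj.pCell x) ≫
  eqToHom (Category.comp_id (adj.μc.app x))
  =
  eqToHom (Category.assoc _ _ _).symm ≫
  (adj.TpCell x ▷ adj.μc.app x) ≫
  eqToHom (Category.id_comp (adj.μc.app x))

end LaxGrayAdjunction

theorem IsModification.square_of_id_vcomp
    {B : Type u₁} {C : Type u₂} [Bicategory.{w₁, v₁} B] [Bicategory.Strict B]
    [Bicategory.{w₂, v₂} C] [Bicategory.Strict C] {S T : Strict2Functor B C}
    {φ : LaxTransCore S T} {ψ : LaxTransCore T S} {m : ∀ a : B, 𝟙 (S.obj a) ⟶ φ.app a ≫ ψ.app a}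
    (hm : IsModification (LaxTransCore.id S) (φ.vcomp ψ) m) {a b : B} (g : a ⟶ b) :
    eqToHom (Category.comp_id (S.map g)).symm ≫
    (S.map g ◁ m b) ≫
    eqToHom (Category.assoc _ _ _).symm ≫
    (φ.naturality g ▷ ψ.app b) ≫
    eqToHom (Category.assoc _ _ _) ≫
    (φ.app a ◁ ψ.naturality g)
    =
    eqToHom (Category.id_comp (S.map g)).symm ≫
    (m a ▷ S.map g) ≫
    eqToHom (Category.assoc _ _ _) := by
  have h := hm g
  simp only [LaxTransCore.vcomp, LaxTransCore.id] at h
  rw [eqToHom_comp_iff]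
  simp only [← Category.assoc] at h ⊢
  rw [comp_eqToHom_iff] at h
  rw [h]
  simp

/-- Given a two-level (lax-Gray) adjunction, the derived data satisfies the
coherence axiom `[Mq]` at every object `x`. -/
theorem laxGrayAdjunction_Mq {X : Type u₁} {A : Type u₂}
    [Bicategory.{w₁, v₁} X] [Bicategory.Strict X] [Bicategory.{w₂, v₂} A]
    [Bicategory.Strict A] (adj : LaxGrayAdjunction X A) (x : X) : adj.Mq x :=
  -- `[Mq]` is the modification square of `u` at the 1-cell `ε_{FX}`: `μ_X = U(ε_{FX})`,
  -- `q = uF` and `a_X = U(ε_{ε_{FX}})` make the two agree definitionally.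
  IsModification.square_of_id_vcomp (S := adj.U) (φ := adj.η.pre adj.U)
    (ψ := adj.ε.post adj.U) adj.u_mod (adj.ε.app (adj.F.obj x))
end

section
/- Let T be a strict 2-endofunctor of a strict 2-category 𝕏 and let η : Id_𝕏 ⟹ T be a lax natural transformation. Then the family of 2-cells η_{η_X} : η_{TX} ∘ η_X ⟹ T(η_X) ∘ η_X (the lax-naturality 2-cell of η at the 1-cell η_X), indexed by the objects X of 𝕏, is a modification from the composite lax natural transformation (ηT) ∘ η to the composite (Tη) ∘ η, where ηT is the whiskering with components (ηT)_X = η_{TX} and Tη is the whiskering with components (Tη)_X = T(η_X). That is, for every 1-cell g : X → Y, the modification equation holds between η_{η_X}, η_{η_Y} and the naturality 2-cells of the composite transformations (ηT)∘η and (Tη)∘η at g. -/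
open CategoryTheory Bicategory

universe w₁ w₂ w₃ v₁ v₂ v₃ u₁ u₂ u₃

variable {B : Type u₁} {C : Type u₂} {D : Type u₃} [Bicategory.{w₁, v₁} B] [Bicategory.Strict B]
  [Bicategory.{w₂, v₂} C] [Bicategory.Strict C] [Bicategory.{w₃, v₃} D] [Bicategory.Strict D]

/-! For `φ : S ⟹ R`, the lax naturality of `η` with respect to the 2-cell
`φ_g : S g ≫ φ_b ⟶ φ_a ≫ R g` relates `η_{S g ≫ φ_b}` and `η_{φ_a ≫ R g}`. Expanding both by the
composition law of `η` produces exactly the two sides of the modification square for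
`a ↦ η_{φ_a}`, up to the associativity identities of a strict 2-category. The theorem is the case
`φ = η`. -/

theorem CategoryTheory.comp_eqToHom_eq_eqToHom_comp_symm {𝒞 : Type*} [Category 𝒞]
    {X X' Y Y' : 𝒞} {f : X ⟶ Y} {g : X' ⟶ Y'} {p : Y = Y'} {q : X = X'}
    (h : f ≫ eqToHom p = eqToHom q ≫ g) : g ≫ eqToHom p.symm = eqToHom q.symm ≫ f := by
  subst p q
  simpa using h.symm

lemma LaxTrans.isModification_naturality_app {T : Strict2Functor C C}
    (η : LaxTrans (Strict2Functor.id C) T) {S R : Strict2Functor B C} (φ : LaxTransCore S R) :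
    IsModification (φ.vcomp (η.pre R)) ((η.pre S).vcomp (φ.post T))
      (fun a => η.naturality (φ.app a)) := by
  intro a b g
  have naturality_square := η.naturality₂ (φ.naturality g)
  rw [η.naturality_comp, η.naturality_comp] at naturality_square
  dsimp +instances only [LaxTransCore.vcomp, LaxTransCore.pre, LaxTransCore.post,
    Strict2Functor.id, Strict2Functor.comp] at naturality_square ⊢
  simp only [Category.assoc, whiskerLeft_comp, whiskerLeft_eqToHom, eqToHom_trans,
    eqToHom_trans_assoc] at naturality_square ⊢
  -- exposes the trailing `eqToHom` of the left-hand side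
  conv_lhs => simp only [← Category.assoc]
  apply comp_eqToHom_eq_eqToHom_comp_symm
  simpa only [Category.assoc] using naturality_square

/-- For a strict 2-endofunctor `T` of a strict 2-category `𝕏` and a lax
natural transformation `η : Id ⟹ T`, the family of lax-naturality 2-cells
`η_{η_x} : η_{Tx} ∘ η_x ⟹ T(η_x) ∘ η_x` is a modification `(ηT) ∘ η ⇛ (Tη) ∘ η`. -/
theorem etaEta_isModification {X : Type u₁} [Bicategory.{w₁, v₁} X] [Bicategory.Strict X]
    (T : Strict2Functor X X) (η : LaxTrans (Strict2Functor.id X) T) :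
    IsModification (η.toLaxTransCore.vcomp (η.toLaxTransCore.pre T))
      (η.toLaxTransCore.vcomp (η.toLaxTransCore.post T))
      (fun x => η.naturality (η.app x)) :=
  η.isModification_naturality_app η.toLaxTransCore
end

section
/- Let 𝕏 and 𝔸 be strict 2-categories, F : 𝕏 → 𝔸 and U : 𝔸 → 𝕏 strict 2-functors, and ε : F∘U ⟹ Id_𝔸 a lax natural transformation. Set T = U∘F and let μ : T∘T ⟹ T be the lax natural transformation with components μ_X = U(ε_{FX}) and naturality cells μ_g = U(ε_{F g}). Then the family of 2-cells a_X = U(ε_{ε_{FX}}) : μ_X ∘ T(μ_X) ⟹ μ_X ∘ μ_{TX}, indexed by the objects X of 𝕏 (where ε_{ε_{FX}} : ε_{FX} ∘ FU(ε_{FX}) ⟹ ε_{FX} ∘ ε_{FUFX} is the lax-naturality 2-cell of ε at the 1-cell ε_{FX}), is a modification from the composite lax natural transformation μ ∘ (Tμ) to μ ∘ (μT), where (Tμ)_X = T(μ_X) and (μT)_X = μ_{TX}. -/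
open CategoryTheory Bicategory

universe w₁ w₂ w₃ v₁ v₂ v₃ u₁ u₂ u₃

variable {B : Type u₁} {C : Type u₂} {D : Type u₃} [Bicategory.{w₁, v₁} B] [Bicategory.Strict B]
  [Bicategory.{w₂, v₂} C] [Bicategory.Strict C] [Bicategory.{w₃, v₃} D] [Bicategory.Strict D]

/-!
Lax naturality of `φ : G ⟹ H` with respect to its own naturality 2-cell `φ_f`, with both sides
expanded by the composition law for naturality cells, is the modification square of the family
`φ_{φ_a}`. For `φ = ε` and `f = F g`, the image of that square under `U` is the square of `a_X`,
up to the identifications `eqToHom` that strictness introduces.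
-/

theorem LaxTrans.isModification_naturality_app_s8 {G H : Strict2Functor C C} (φ : LaxTrans G H) :
    IsModification ((φ.post G).vcomp (φ.pre H)) ((φ.pre G).vcomp (φ.post H))
      (fun a => φ.naturality (φ.app a)) := by
  intro a b f
  have key := φ.naturality₂ (φ.naturality f)
  rw [φ.naturality_comp, φ.naturality_comp] at key
  unfold LaxTransCore.vcomp LaxTransCore.post LaxTransCore.pre Strict2Functor.comp
  simp only [whiskerLeft_comp, comp_whiskerRight, whiskerLeft_eqToHom, eqToHom_whiskerRight,
    Category.assoc, eqToHom_trans, eqToHom_trans_assoc]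
  simp only [← Category.assoc] at key
  rw [comp_eqToHom_iff] at key
  rw [eq_comm, eqToHom_comp_iff]
  simp only [Category.assoc] at key ⊢
  exact key

open LaxTransCore Strict2Functor in
/-- Given strict 2-functors `F : 𝕏 → 𝔸`, `U : 𝔸 → 𝕏` and a lax natural
transformation `ε : F∘U ⟹ Id`, setting `T = U∘F` and `μ = UεF` (components `U(ε_{Fx})`,
naturality cells `U(ε_{Fg})`), the family `a_x = U(ε_{ε_{Fx}})` is a modification
`μ ∘ (Tμ) ⇛ μ ∘ (μT)`. -/
theorem a_isModification {X : Type u₁} {A : Type u₂} [Bicategory.{w₁, v₁} X]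
    [Bicategory.Strict X] [Bicategory.{w₂, v₂} A] [Bicategory.Strict A]
    (F : Strict2Functor X A) (U : Strict2Functor A X)
    (ε' : LaxTrans (U.comp F) (Strict2Functor.id A)) :
    letI T : Strict2Functor X X := F.comp U
    letI μ : LaxTransCore (T.comp T) T := (ε'.toLaxTransCore.pre F).post U
    IsModification ((μ.post T).vcomp μ) ((μ.pre T).vcomp μ)
      (fun x =>
        eqToHom (U.map_comp _ _).symm ≫
          U.map₂ (ε'.naturality (ε'.app (F.obj x))) ≫ eqToHom (U.map_comp _ _)) := by
  intro x y g
  have key := congrArg U.map₂ (ε'.isModification_naturality_app_s8 (F.map g))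
  unfold vcomp post pre Strict2Functor.comp Strict2Functor.id at key ⊢
  simp only [map₂_comp, map₂_eqToHom, map₂_whiskerLeft, map₂_whiskerRight, whiskerLeft_comp,
    comp_whiskerRight, whiskerLeft_eqToHom, eqToHom_whiskerRight, Category.assoc, eqToHom_trans,
    eqToHom_trans_assoc] at key ⊢
  rw [eqToHom_comp_iff] at key ⊢
  simp only [← Category.assoc] at key ⊢
  rw [comp_eqToHom_iff] at key ⊢
  simp only [Category.assoc, eqToHom_trans] at key ⊢
  exact key
end
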